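/- For all integers n, x, y with 1 ≤ y ≤ x, 2 ≤ x ≤ n − 2, the count P_n(x,y) satisfies the recurrence P_n(x,y) = Σ_{i=0}^{y−1} P_{n−i−1}(x−i, y) + Σ_{j=0}^{y} P_{n−y−1}(x−y, j). -/

import Mathlib

/-- Number of 0s in a bitstring (`false` represents 0, `true` represents 1). -/
def zeros (s : List Bool) : ℕ := s.count false

/-- Length of the longest run of consecutive 0s in a bitstring
(0 if the string has no 0s). -/
def maxrun (s : List Bool) : ℕ := ((s.splitOn true).map List.length).foldr max 0


/-- A bitstring is pinned if it is nonempty and both its first and last bits are 0. -/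
def Pinned (s : List Bool) : Prop :=
  s ≠ [] ∧ s.head? = some false ∧ s.getLast? = some false

/-- `P n x y` is the number of pinned bitstrings of length `n` with exactly `x` 0s
and longest run of 0s exactly `y`. -/
noncomputable def P (n x y : ℕ) : ℕ :=
  Nat.card {s : List Bool // s.length = n ∧ Pinned s ∧ zeros s = x ∧ maxrun s = y}

/-! A pinned string containing a 1 factors uniquely as `0^a 1 t` with `1 ≤ a ≤ y` and `t`
ending in 0, and such a `t` is either pinned or `1 t'` with `t'` ending in 0. Since `x ≤ n - 2`,
the pinned strings of length `n - 1` factor in the same way, so they correspond to the strings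
`0^a 1 1 t'` of length `n`: this is the term `i = 0`. The strings `0^a 1 t` with `t` pinned
give the terms `i = a < y`, where `maxrun t = y`, and, for `a = y`, the sum over
`j = maxrun t ≤ y`. -/

open Finset

instance : DecidablePred Pinned := fun _ => inferInstanceAs (Decidable (_ ∧ _ ∧ _))

def words (n : ℕ) : Finset (List Bool) :=
  (univ : Finset (Fin n → Bool)).image List.ofFn

@[simp]
lemma mem_words {n : ℕ} {s : List Bool} : s ∈ words n ↔ s.length = n := by
  simp only [words, mem_image, mem_univ, true_and]
  refine ⟨fun ⟨f, hf⟩ => hf ▸ List.length_ofFn, fun h => ?_⟩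
  subst h
  exact ⟨fun i => s[i], List.ofFn_getElem⟩

lemma P_eq_card (n x y : ℕ) :
    P n x y = #{s ∈ words n | Pinned s ∧ zeros s = x ∧ maxrun s = y} := by
  rw [P, ← Nat.card_eq_finsetCard]
  exact Nat.card_congr (Equiv.subtypeEquivRight fun s => by simp)

@[simp]
lemma zeros_cons_true (t : List Bool) : zeros (true :: t) = zeros t := by
  simp [zeros]

@[simp]
lemma maxrun_cons_true (t : List Bool) : maxrun (true :: t) = maxrun t := by
  simp [maxrun, List.splitOn, List.splitOnP_cons_eq_if_modifyHead]

@[simp]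
lemma zeros_replicate_append (a : ℕ) (t : List Bool) :
    zeros (List.replicate a false ++ t) = a + zeros t := by
  simp [zeros]

@[simp]
lemma maxrun_replicate_append_true_cons (a : ℕ) (t : List Bool) :
    maxrun (List.replicate a false ++ true :: t) = max a (maxrun t) := by
  have : (List.replicate a false ++ true :: t).splitOn true
      = List.replicate a false :: t.splitOn true := by
    simpa [List.splitOn] using List.splitOnP_append_cons_of_forall_mem (p := (· == true))
      (by simp +contextual) true rfl t
  simp [maxrun, this]

@[simp]
lemma getLast?_cons_true_eq_some_false (t : List Bool) :
    (true :: t).getLast? = some false ↔ t.getLast? = some false := by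
  cases h : t.getLast? <;> simp [List.getLast?_cons, h]

lemma pinned_replicate_append_true_cons_iff {a : ℕ} (ha : a ≠ 0) (t : List Bool) :
    Pinned (List.replicate a false ++ true :: t) ↔ t.getLast? = some false := by
  obtain ⟨a, rfl⟩ := Nat.exists_eq_succ_of_ne_zero ha
  simp only [Pinned, List.replicate_succ, List.cons_append, ne_eq, reduceCtorEq,
    not_false_eq_true, List.head?_cons, true_and]
  rw [← List.cons_append, List.getLast?_append_of_ne_nil _ (List.cons_ne_nil _ _),
    getLast?_cons_true_eq_some_false]

lemma replicate_append_true_cons_inj {a b : ℕ} {t u : List Bool}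
    (h : List.replicate a false ++ true :: t = List.replicate b false ++ true :: u) :
    a = b ∧ t = u := by
  induction a generalizing b with
  | zero => cases b <;> simp_all [List.replicate_succ]
  | succ a ih =>
    cases b with
    | zero => simp [List.replicate_succ] at h
    | succ b => simpa using ih (by simpa [List.replicate_succ] using h)

lemma exists_eq_replicate_append_true_cons {s : List Bool} (h : true ∈ s) :
    ∃ a t, s = List.replicate a false ++ true :: t := by
  induction s with
  | nil => simp at h
  | cons b s ih =>
    cases b with
    | true => exact ⟨0, s, rfl⟩
    | false =>
      obtain ⟨a, t, rfl⟩ := ih (by simpa using h)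
      exact ⟨a + 1, t, rfl⟩

lemma true_mem_of_zeros_lt_length {s : List Bool} (h : zeros s < s.length) : true ∈ s := by
  by_contra hs
  exact h.ne (List.count_eq_length.2 fun b hb => by cases b <;> simp_all)

lemma card_pinned_true_mem_eq_sum (n : ℕ) (p : List Bool → Prop) [DecidablePred p] :
    #{s ∈ words n | Pinned s ∧ true ∈ s ∧ p s} =
      ∑ a ∈ Ico 1 n, #{t ∈ words (n - a - 1) | t.getLast? = some false ∧
        p (List.replicate a false ++ true :: t)} := by
  rw [← card_sigma, ← card_image_of_injOn
    (f := fun x : (_ : ℕ) × List Bool => List.replicate x.1 false ++ true :: x.2)]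
  · congr 1
    ext s
    simp only [mem_filter, mem_words, mem_image, mem_sigma, mem_Ico, Sigma.exists]
    constructor
    · rintro ⟨hlen, hpin, htrue, hp⟩
      obtain ⟨a, t, rfl⟩ := exists_eq_replicate_append_true_cons htrue
      have ha : a ≠ 0 := by rintro rfl; simp [Pinned] at hpin
      rw [pinned_replicate_append_true_cons_iff ha] at hpin
      simp only [List.length_append, List.length_replicate, List.length_cons] at hlen
      exact ⟨a, t, ⟨⟨by omega, by omega⟩, by omega, hpin, hp⟩, rfl⟩
    · rintro ⟨a, t, ⟨⟨ha, han⟩, hlen, hlast, hp⟩, rfl⟩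
      refine ⟨?_, (pinned_replicate_append_true_cons_iff (by omega) t).2 hlast, by simp, hp⟩
      simp only [List.length_append, List.length_replicate, List.length_cons]
      omega
  · rintro ⟨a, t⟩ _ ⟨b, u⟩ _ h
    obtain ⟨rfl, rfl⟩ := replicate_append_true_cons_inj h
    rfl

lemma P_eq_sum_card_getLast?_false {n z y : ℕ} (hyz : y ≤ z) (hzn : z < n) :
    P n z y = ∑ a ∈ Ico 1 (y + 1), #{t ∈ words (n - a - 1) |
      t.getLast? = some false ∧ zeros t = z - a ∧ max a (maxrun t) = y} := by
  have hones : #{s ∈ words n | Pinned s ∧ zeros s = z ∧ maxrun s = y}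
      = #{s ∈ words n | Pinned s ∧ true ∈ s ∧ zeros s = z ∧ maxrun s = y} := by
    refine congrArg card (filter_congr fun s hs => ?_)
    rw [mem_words] at hs
    exact ⟨fun ⟨hpin, hz, hy⟩ => ⟨hpin, true_mem_of_zeros_lt_length (by omega), hz, hy⟩,
      fun ⟨hpin, _, hz, hy⟩ => ⟨hpin, hz, hy⟩⟩
  rw [P_eq_card, hones, card_pinned_true_mem_eq_sum,
    ← sum_subset (s₁ := Ico 1 (y + 1)) (Ico_subset_Ico_right (by omega))]
  · refine sum_congr rfl fun a ha => congrArg card (filter_congr fun t _ => ?_)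
    rw [mem_Ico] at ha
    simp only [zeros_replicate_append, zeros_cons_true, maxrun_replicate_append_true_cons]
    exact and_congr_right fun _ => by omega
  · intro a ha hay
    rw [mem_Ico] at ha hay
    refine card_eq_zero.2 (filter_eq_empty_iff.2 fun t _ ⟨_, _, hmax⟩ => ?_)
    simp only [maxrun_replicate_append_true_cons] at hmax
    omega

lemma card_getLast?_false_words_succ (m : ℕ) (p : List Bool → Prop) [DecidablePred p] :
    #{s ∈ words (m + 1) | s.getLast? = some false ∧ p s} =
      #{s ∈ words (m + 1) | Pinned s ∧ p s} +
        #{t ∈ words m | t.getLast? = some false ∧ p (true :: t)} := by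
  rw [← card_filter_add_card_filter_not (p := fun s => s.head? = some false), filter_filter,
    filter_filter]
  congr 1
  · refine congrArg card (filter_congr fun s hs => ?_)
    have hne : s ≠ [] := List.ne_nil_of_length_pos (by simp at hs; omega)
    simp only [Pinned]
    tauto
  · conv_rhs => rw [← card_map ⟨List.cons true, List.cons_injective⟩]
    congr 1
    ext s
    rcases s with _ | ⟨_ | _, t⟩ <;> simp

lemma P_eq_P_pred_add_sum {n x y : ℕ} (hyx : y ≤ x) (hxn : x + 2 ≤ n) :
    P n x y = P (n - 1) x y + ∑ a ∈ Ico 1 (y + 1),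
      #{t ∈ words (n - a - 1) | Pinned t ∧ zeros t = x - a ∧ max a (maxrun t) = y} := by
  rw [P_eq_sum_card_getLast?_false hyx (by omega), P_eq_sum_card_getLast?_false hyx (by omega),
    ← sum_add_distrib]
  refine sum_congr rfl fun a ha => ?_
  rw [mem_Ico] at ha
  obtain ⟨m, hm⟩ : ∃ m, n - a - 1 = m + 1 := ⟨n - a - 2, by omega⟩
  rw [hm, card_getLast?_false_words_succ, show n - 1 - a - 1 = m by omega, add_comm]
  simp only [zeros_cons_true, maxrun_cons_true]

lemma card_pinned_max_of_lt (m z : ℕ) {a y : ℕ} (hay : a < y) :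
    #{t ∈ words m | Pinned t ∧ zeros t = z ∧ max a (maxrun t) = y} = P m z y := by
  rw [P_eq_card]
  exact congrArg card (filter_congr fun t _ => and_congr_right fun _ =>
    and_congr_right fun _ => by omega)

lemma card_pinned_max_self (m z y : ℕ) :
    #{t ∈ words m | Pinned t ∧ zeros t = z ∧ max y (maxrun t) = y} =
      ∑ j ∈ range (y + 1), P m z j := by
  rw [card_eq_sum_card_fiberwise (f := maxrun) (t := range (y + 1))]
  · refine sum_congr rfl fun j hj => ?_
    rw [mem_range] at hj
    rw [filter_filter, P_eq_card]
    exact congrArg card (filter_congr fun t _ =>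
      ⟨fun ⟨⟨hpin, hz, _⟩, hjt⟩ => ⟨hpin, hz, hjt⟩,
        fun ⟨hpin, hz, hjt⟩ => ⟨⟨hpin, hz, by omega⟩, hjt⟩⟩)
  · intro t ht
    rw [mem_coe, mem_filter] at ht
    rw [mem_coe, mem_range]
    omega

theorem P_recurrence_general (n x y : ℕ) (hy : 1 ≤ y) (hyx : y ≤ x)
    (hx : x ≤ n - 2) :
    P n x y = (∑ i ∈ Finset.range y, P (n - i - 1) (x - i) y)
      + ∑ j ∈ Finset.range (y + 1), P (n - y - 1) (x - y) j := by
  rw [P_eq_P_pred_add_sum hyx (by omega), sum_Ico_succ_top hy, range_eq_Ico,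
    sum_eq_sum_Ico_succ_bot (by omega : 0 < y), card_pinned_max_self, Nat.sub_zero,
    Nat.sub_zero, add_assoc]
  congr 2
  exact sum_congr rfl fun a ha => card_pinned_max_of_lt _ _ (mem_Ico.1 ha).2

theorem P_recurrence (n x y : ℕ) (hy : 1 ≤ y) (hyx : y ≤ x) (hx2 : 2 ≤ x)
    (hx : x ≤ n - 2) :
    P n x y = (∑ i ∈ Finset.range y, P (n - i - 1) (x - i) y)
      + ∑ j ∈ Finset.range (y + 1), P (n - y - 1) (x - y) j :=
  P_recurrence_general n x y hy hyx hx
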